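/- Every λ ∈ E is an approximate eigenvalue of S acting on ℓ^∞(ℕ): there exists a sequence (u^{(k)})_{k≥0} of elements of ℓ^∞(ℕ) with ‖u^{(k)}‖_∞ = 1 for all k and lim_{k→∞} ‖S u^{(k)} − λ u^{(k)}‖_∞ = 0. In particular E is contained in the approximate point spectrum of S, hence in the spectrum of S. -/

import Mathlib

/-!
For `λ ∈ E` let `v(N) = ∏ᵢ q_{F_i}(λ)^{ε_i(N)}` over the Zeckendorf digits of `N`. A transition
out of `N` only rewrites the alternating block `…1010` of low digits of `N`, and on that block the
recursion defining the `q_{F_n}` is exactly what makes `S v = λ v` hold row by row.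
If `v` is bounded, `v / ‖v‖_∞` is an eigenvector. Otherwise truncate `v` to `[0, F_k)`: the only
defects are in row `F_k - 1`, whose forward jump leaves the window (defect `≤ |q_{F_k}(λ)|`,
bounded on `E`), and in rows `≥ F_k` whose longest backward jump lands at `0` (defect
`≤ |v(0)| = 1`). As `max_{N < F_k} |v(N)| → ∞`, the normalised truncations are approximate
eigenvectors.
-/

/-- Fibonacci sequence with `F 0 = 1`, `F 1 = 2`, `F (n+2) = F (n+1) + F n`. -/
def fibF : ℕ → ℕ
  | 0 => 1
  | 1 => 2
  | (n+2) => fibF (n+1) + fibF n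

lemma fibF_pos : ∀ n, 0 < fibF n
  | 0 => by simp [fibF]
  | 1 => by simp [fibF]
  | (n+2) => by
      have h1 := fibF_pos (n+1)
      simp only [fibF]
      omega

/-- Zeckendorf digits of `N` in the base `fibF`: `N = ∑ i, zeck N i * fibF i`,
with `zeck N i ∈ {0,1}` and no two consecutive `1`'s. -/
def zeck (N i : ℕ) : ℕ :=
  if h : N = 0 then 0
  else if i = Nat.findGreatest (fun j => fibF j ≤ N) N then 1
  else zeck (N - fibF (Nat.findGreatest (fun j => fibF j ≤ N) N)) i
termination_by N
decreasing_by
  exact Nat.sub_lt (Nat.pos_of_ne_zero h) (fibF_pos _)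

lemma zeck_eq_zero_of_lt : ∀ N, ∀ i, N < i → zeck N i = 0 := by
  intro N
  induction N using Nat.strong_induction_on with
  | _ N ih =>
    intro i hi
    rw [zeck]
    split
    · rfl
    · rename_i h
      have hkN : Nat.findGreatest (fun j => fibF j ≤ N) N ≤ N := Nat.findGreatest_le N
      rw [if_neg (by omega)]
      exact ih _ (Nat.sub_lt (Nat.pos_of_ne_zero h) (fibF_pos _)) i
        (lt_of_le_of_lt (Nat.sub_le _ _) hi)

lemma exists_break0 (N : ℕ) : ∃ i, ¬(zeck N (2*i+1) = 1 ∧ zeck N (2*i) = 0) := by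
  refine ⟨N + 1, ?_⟩
  have h : zeck N (2*(N+1)+1) = 0 := zeck_eq_zero_of_lt N _ (by omega)
  simp [h]

lemma exists_break1 (N : ℕ) : ∃ i, ¬(zeck N (2*i+2) = 1 ∧ zeck N (2*i+1) = 0) := by
  refine ⟨N + 1, ?_⟩
  have h : zeck N (2*(N+1)+2) = 0 := zeck_eq_zero_of_lt N _ (by omega)
  simp [h]

/-- The number `s` of `10`-blocks carried in the stochastic Fibonacci adding machine:
if the digits of `N` end with `00(10)^s` (case `ε₀ = 0`) or with `00(10)^s1`
(case `ε₀ = 1`), this returns `s`. -/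
def carryLen (N : ℕ) : ℕ :=
  if zeck N 0 = 0 then Nat.find (exists_break0 N) else Nat.find (exists_break1 N)

/-- `Pprod p t = p 1 * p 2 * ⋯ * p t`. -/
def Pprod (p : ℕ → ℝ) (t : ℕ) : ℝ := ∏ i ∈ Finset.Icc 1 t, p i

/-- The transition matrix `S` of the Fibonacci stochastic adding machine associated to
the probability sequence `p`:  `S N N = 1 - p 1`;  if the digits of `N` end with
`00(10)^s` then `S N (N+1) = p 1 ⋯ p (s+1)` and `S N (N+1-F (2m)) = p 1 ⋯ p m * (1 - p (m+1))`
for `1 ≤ m ≤ s`;  if the digits of `N` end with `00(10)^s1` then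
`S N (N+1) = p 1 ⋯ p (s+2)` and `S N (N+1-F (2m-1)) = p 1 ⋯ p m * (1 - p (m+1))` for
`1 ≤ m ≤ s+1`;  all other entries vanish. -/
noncomputable def Smat (p : ℕ → ℝ) (N M : ℕ) : ℝ :=
  (if M = N then 1 - p 1 else 0) +
  if zeck N 0 = 0 then
    (if M = N + 1 then Pprod p (carryLen N + 1) else 0) +
    ∑ m ∈ Finset.Icc 1 (carryLen N),
      (if M = N + 1 - fibF (2*m) then Pprod p m * (1 - p (m+1)) else 0)
  else
    (if M = N + 1 then Pprod p (carryLen N + 2) else 0) +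
    ∑ m ∈ Finset.Icc 1 (carryLen N + 1),
      (if M = N + 1 - fibF (2*m - 1) then Pprod p m * (1 - p (m+1)) else 0)

/-- `rr p n = r_n = p (⌊(n+1)/2⌋ + 1)`. -/
noncomputable def rr (p : ℕ → ℝ) (n : ℕ) : ℝ := p ((n+1)/2 + 1)

/-- `qF p z n = q_{F_n}(z)`. -/
noncomputable def qF (p : ℕ → ℝ) (z : ℂ) : ℕ → ℂ
  | 0 => (z - (1 - (p 1 : ℂ))) / (p 1 : ℂ)
  | 1 => (1 / (p 2 : ℂ)) * (qF p z 0) ^ 2 - (1 / (p 2 : ℂ) - 1)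
  | (n+2) => (1 / (rr p (n+2) : ℂ)) * qF p z (n+1) * qF p z n - (1 / (rr p (n+2) : ℂ) - 1)

/-- The fibered filled Julia set `E = {z : (q_{F_n}(z))ₙ is bounded}`. -/
def Eset (p : ℕ → ℝ) : Set ℂ := {z : ℂ | ∃ C : ℝ, ∀ n : ℕ, ‖qF p z n‖ ≤ C}

open Finset

lemma fibF_add_two (n : ℕ) : fibF (n + 2) = fibF (n + 1) + fibF n := rfl

lemma fibF_strictMono : StrictMono fibF :=
  strictMono_nat_of_lt_succ fun n => by
    cases n with
    | zero => decide
    | succ n =>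
      show fibF (n + 1) < fibF (n + 2)
      have := fibF_pos n
      rw [fibF_add_two]
      omega

lemma lt_fibF (n : ℕ) : n < fibF n := by
  induction n with
  | zero => exact fibF_pos 0
  | succ n ih => exact lt_of_le_of_lt ih (fibF_strictMono n.lt_succ_self)

lemma lt_fibF_of_le {N L : ℕ} (h : N ≤ L) : N < fibF L := h.trans_lt (lt_fibF L)

/-! ### Zeckendorf digits -/

def zeckTop (N : ℕ) : ℕ := Nat.findGreatest (fun j => fibF j ≤ N) N

lemma fibF_zeckTop_le {N : ℕ} (hN : N ≠ 0) : fibF (zeckTop N) ≤ N :=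
  Nat.findGreatest_spec (P := fun j => fibF j ≤ N) (Nat.zero_le N) (by simp only [fibF]; omega)

lemma lt_fibF_zeckTop_add_one (N : ℕ) : N < fibF (zeckTop N + 1) := by
  by_cases h : zeckTop N + 1 ≤ N
  · exact not_le.1 (Nat.findGreatest_is_greatest (P := fun j => fibF j ≤ N)
      (Nat.lt_succ_self _) h)
  · have := lt_fibF (zeckTop N + 1)
    omega

lemma sub_fibF_zeckTop_lt {N : ℕ} (hN : N ≠ 0) :
    N - fibF (zeckTop N) < fibF (zeckTop N - 1) := by
  have h1 := fibF_zeckTop_le hN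
  have h2 := lt_fibF_zeckTop_add_one N
  rcases hT : zeckTop N with _ | t
  · rw [hT] at h1 h2
    norm_num [fibF] at h1 h2 ⊢
    omega
  · rw [hT, fibF_add_two] at h2
    rw [hT] at h1
    simpa using (by omega : N - fibF (t + 1) < fibF t)

lemma zeck_zero (i : ℕ) : zeck 0 i = 0 := by
  rw [zeck]; simp

lemma zeck_eq_ite {N : ℕ} (hN : N ≠ 0) (i : ℕ) :
    zeck N i = if i = zeckTop N then 1 else zeck (N - fibF (zeckTop N)) i := by
  rw [zeck, dif_neg hN]; rfl

lemma zeck_eq_zero_of_lt_fibF {N i : ℕ} (h : N < fibF i) : zeck N i = 0 := by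
  induction N using Nat.strong_induction_on with
  | _ N ih =>
    rcases eq_or_ne N 0 with rfl | hN
    · exact zeck_zero i
    · have hi : i ≠ zeckTop N := by rintro rfl; have := fibF_zeckTop_le hN; omega
      rw [zeck_eq_ite hN, if_neg hi]
      exact ih _ (Nat.sub_lt (Nat.pos_of_ne_zero hN) (fibF_pos _)) (by omega)

/-- Encodes both `ε i ≤ 1` and the absence of two consecutive `1`s. -/
def ZeckAdmissible (ε : ℕ → ℕ) : Prop := ∀ i, ε i + ε (i + 1) ≤ 1

lemma zeckAdmissible_zeck (N : ℕ) : ZeckAdmissible (zeck N) := by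
  induction N using Nat.strong_induction_on with
  | _ N ih =>
    intro i
    rcases eq_or_ne N 0 with rfl | hN
    · simp [zeck_zero]
    · set M := N - fibF (zeckTop N)
      have hM : ∀ j, zeckTop N - 1 ≤ j → zeck M j = 0 := fun j hj =>
        zeck_eq_zero_of_lt_fibF ((sub_fibF_zeckTop_lt hN).trans_le
          (fibF_strictMono.monotone hj))
      have := ih M (Nat.sub_lt (Nat.pos_of_ne_zero hN) (fibF_pos _)) i
      rw [zeck_eq_ite hN, zeck_eq_ite hN]
      split_ifs with h1 h2 h2
      · omega
      · rw [hM (i + 1) (by omega)]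
      · rw [hM i (by omega)]
      · exact this

lemma sum_zeck_mul_fibF {N L : ℕ} (h : N < fibF L) :
    ∑ i ∈ range L, zeck N i * fibF i = N := by
  induction N using Nat.strong_induction_on with
  | _ N ih =>
    rcases eq_or_ne N 0 with rfl | hN
    · simp [zeck_zero]
    · have hT := fibF_zeckTop_le hN
      have hTL : zeckTop N < L := fibF_strictMono.lt_iff_lt.1 (hT.trans_lt h)
      have hT0 : zeck (N - fibF (zeckTop N)) (zeckTop N) = 0 := zeck_eq_zero_of_lt_fibF
        ((sub_fibF_zeckTop_lt hN).trans_le (fibF_strictMono.monotone (Nat.sub_le _ 1)))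
      have hsplit : ∀ i ∈ range L, zeck N i * fibF i = (if i = zeckTop N then fibF i else 0)
          + zeck (N - fibF (zeckTop N)) i * fibF i := by
        intro i _
        rw [zeck_eq_ite hN]
        split_ifs with hi
        · subst hi; simp [hT0]
        · simp
      rw [sum_congr rfl hsplit, sum_add_distrib, sum_ite_eq', if_pos (mem_range.2 hTL),
        ih _ (Nat.sub_lt (Nat.pos_of_ne_zero hN) (fibF_pos _)) (by omega)]
      omega

lemma ZeckAdmissible.sum_lt {ε : ℕ → ℕ} (hε : ZeckAdmissible ε) (t : ℕ) :
    ∑ i ∈ range t, ε i * fibF i < fibF t := by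
  induction t using Nat.twoStepInduction with
  | zero => simp [fibF]
  | one => have := hε 0; simp only [range_one, sum_singleton, fibF, mul_one]; omega
  | more t ih ih' =>
    rw [sum_range_succ, fibF_add_two]
    have := hε t
    rcases (by omega : ε (t + 1) = 0 ∨ ε (t + 1) = 1) with h | h
    · have := fibF_pos t
      rw [h, zero_mul, add_zero]
      omega
    · rw [sum_range_succ, h, (by omega : ε t = 0)]
      omega

lemma ZeckAdmissible.eq_of_sum_eq {ε ε' : ℕ → ℕ} (hε : ZeckAdmissible ε)
    (hε' : ZeckAdmissible ε') {B : ℕ}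
    (h : ∑ i ∈ range B, ε i * fibF i = ∑ i ∈ range B, ε' i * fibF i) :
    ∀ i < B, ε i = ε' i := by
  induction B with
  | zero => simp
  | succ B ih =>
    rw [sum_range_succ, sum_range_succ] at h
    have hB : ε B = ε' B := by
      have := hε.sum_lt B
      have := hε'.sum_lt B
      have := hε B
      have := hε' B
      rcases (by omega : ε B = 0 ∨ ε B = 1) with h1 | h1 <;>
        rcases (by omega : ε' B = 0 ∨ ε' B = 1) with h2 | h2 <;>
        simp only [h1, h2] at h ⊢ <;> omega
    intro i hi
    rcases Nat.lt_succ_iff_lt_or_eq.1 hi with hi | rfl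
    · exact ih (by rw [hB] at h; omega) i hi
    · exact hB

lemma zeck_eq_of_zeckAdmissible {ε : ℕ → ℕ} (hε : ZeckAdmissible ε) {B N : ℕ}
    (hsupp : ∀ i, B ≤ i → ε i = 0) (hsum : ∑ i ∈ range B, ε i * fibF i = N) :
    zeck N = ε := by
  have hN : N < fibF B := hsum ▸ hε.sum_lt B
  funext i
  by_cases hi : i < B
  · exact (zeckAdmissible_zeck N).eq_of_sum_eq hε (by rw [sum_zeck_mul_fibF hN, hsum]) i hi
  · rw [hsupp i (not_lt.1 hi)]
    exact zeck_eq_zero_of_lt_fibF (hN.trans_le (fibF_strictMono.monotone (not_lt.1 hi)))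

lemma zeck_fibF (k : ℕ) : zeck (fibF k) = fun i => if i = k then 1 else 0 := by
  refine zeck_eq_of_zeckAdmissible (B := k + 1) (fun i => ?_) (fun i hi => ?_) ?_
  · split_ifs <;> omega
  · simp only [ite_eq_right_iff]
    omega
  · simp [ite_mul]

lemma sum_range_zeck_mul_fibF_le (N a : ℕ) : ∑ i ∈ range a, zeck N i * fibF i ≤ N := by
  calc ∑ i ∈ range a, zeck N i * fibF i ≤ ∑ i ∈ range (a + N), zeck N i * fibF i :=
        sum_le_sum_of_subset (range_subset_range.2 (by omega))
    _ = N := sum_zeck_mul_fibF (lt_fibF_of_le (by omega))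

lemma lt_fibF_of_zeck_eq_zero {N B : ℕ} (h : ∀ i, B ≤ i → zeck N i = 0) : N < fibF B := by
  have hsum := sum_zeck_mul_fibF (lt_fibF_of_le (Nat.le_add_left N B))
  rw [← sum_range_add_sum_Ico _ (Nat.le_add_right B N),
    sum_eq_zero (s := Ico B (B + N)) (fun i hi => by rw [h i (mem_Ico.1 hi).1, zero_mul]),
    add_zero] at hsum
  exact hsum ▸ (zeckAdmissible_zeck N).sum_lt B

lemma sum_range_ite_lt {M : Type*} [AddCommMonoid M] (f : ℕ → M) {a B : ℕ} (h : a ≤ B) :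
    ∑ i ∈ range B, (if i < a then f i else 0) = ∑ i ∈ range a, f i := by
  rw [← sum_filter]
  congr 1
  ext i
  simp only [mem_filter, mem_range]
  omega

lemma zeck_add_one_sub_fibF {N a : ℕ} (h : ∑ i ∈ range a, zeck N i * fibF i + 1 = fibF a) :
    zeck (N + 1 - fibF a) = fun i => if i < a then 0 else zeck N i := by
  have ha : a ≤ N + 1 := by
    have := sum_range_zeck_mul_fibF_le N a
    have := lt_fibF a
    omega
  refine zeck_eq_of_zeckAdmissible (B := N + 1) (fun i => ?_) (fun i hi => ?_) ?_
  · have := zeckAdmissible_zeck N i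
    split_ifs <;> omega
  · rw [zeck_eq_zero_of_lt_fibF (lt_fibF_of_le (by omega))]
    simp
  · have hsplit : ∀ i ∈ range (N + 1), zeck N i * fibF i =
        (if i < a then 0 else zeck N i) * fibF i + (if i < a then zeck N i * fibF i else 0) := by
      intro i _; split_ifs <;> simp
    have hsum := sum_zeck_mul_fibF (lt_fibF_of_le N.le_succ)
    rw [sum_congr rfl hsplit, sum_add_distrib, sum_range_ite_lt _ ha] at hsum
    omega

lemma zeck_add_one {N a : ℕ} (h : ∑ i ∈ range a, zeck N i * fibF i + 1 = fibF a)
    (ha : zeck N a = 0) (ha' : zeck N (a + 1) = 0) :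
    zeck (N + 1) = fun i => if i < a then 0 else if i = a then 1 else zeck N i := by
  have haN : a ≤ N := by
    have := sum_range_zeck_mul_fibF_le N a
    have := lt_fibF a
    omega
  refine zeck_eq_of_zeckAdmissible (B := N + 1) (fun i => ?_) (fun i hi => ?_) ?_
  · have := zeckAdmissible_zeck N i
    rcases eq_or_ne i a with rfl | hia
    · simp [ha']
    · split_ifs <;> omega
  · rw [zeck_eq_zero_of_lt_fibF (lt_fibF_of_le (by omega)), if_neg (by omega), if_neg (by omega)]
  · have hsplit : ∀ i ∈ range (N + 1),
        (if i < a then 0 else if i = a then 1 else zeck N i) * fibF i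
          + (if i < a then zeck N i * fibF i else 0)
        = zeck N i * fibF i + (if i = a then fibF i else 0) := by
      intro i _; split_ifs <;> simp_all
    have hsum := sum_zeck_mul_fibF (lt_fibF_of_le N.le_succ)
    have := sum_congr rfl hsplit
    rw [sum_add_distrib, sum_add_distrib, sum_range_ite_lt _ (by omega), hsum, sum_ite_eq',
      if_pos (mem_range.2 (by omega))] at this
    omega

/-! ### The alternating tail of a Zeckendorf expansion -/

/-- Read from position `t - 1` down to `0`, the digits `altDigit t` are `1, 0, 1, 0, …`. -/
def altDigit (t i : ℕ) : ℕ := if i % 2 = t % 2 then 0 else 1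

lemma altDigit_add_two (t i : ℕ) : altDigit (t + 2) i = altDigit t i := by
  simp [altDigit, Nat.add_mod_right]

lemma altDigit_self (t : ℕ) : altDigit t t = 0 := by simp [altDigit]

lemma altDigit_succ (t : ℕ) : altDigit t (t + 1) = 1 := by simp [altDigit]; omega

lemma sum_altDigit_mul_fibF (a : ℕ) : ∑ i ∈ range a, altDigit a i * fibF i + 1 = fibF a := by
  induction a using Nat.twoStepInduction with
  | zero => simp [fibF]
  | one => simp [altDigit, fibF]
  | more a ih _ =>
    rw [sum_range_succ, sum_range_succ, fibF_add_two]
    simp only [altDigit_add_two, altDigit_self, altDigit_succ]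
    omega

/-- `tailLen N = 2s` if the digits of `N` end with `00(10)^s`, and `tailLen N = 2s+1` if they end
with `00(10)^s1`. -/
def tailLen (N : ℕ) : ℕ := if zeck N 0 = 0 then 2 * carryLen N else 2 * carryLen N + 1

lemma zeck_eq_altDigit_of_pairs {N e s : ℕ} (he : zeck N 0 = e)
    (hpair : ∀ j < s, zeck N (2 * j + e + 1) = 1 ∧ zeck N (2 * j + e) = 0)
    (hbreak : ¬(zeck N (2 * s + e + 1) = 1 ∧ zeck N (2 * s + e) = 0)) :
    (∀ i ≤ 2 * s + e, zeck N i = altDigit (2 * s + e) i) ∧ zeck N (2 * s + e + 1) = 0 := by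
  have hadm := zeckAdmissible_zeck N
  have he1 : e ≤ 1 := by have := hadm 0; omega
  have hlt : ∀ i < 2 * s + e, zeck N i = altDigit (2 * s + e) i := by
    intro i hi
    by_cases hie : i < e
    · obtain rfl : i = 0 := by omega
      simp only [altDigit]
      split_ifs <;> omega
    · obtain ⟨j, hj | hj⟩ : ∃ j, i = 2 * j + e ∨ i = 2 * j + e + 1 := ⟨(i - e) / 2, by omega⟩
      all_goals
        have := hpair j (by omega)
        subst hj
        simp only [altDigit]
        split_ifs <;> omega
  have ht : zeck N (2 * s + e) = 0 := by
    rcases Nat.eq_zero_or_pos (2 * s + e) with h0 | hpos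
    · rw [h0]; omega
    · have h1 := hlt (2 * s + e - 1) (by omega)
      have h2 := hadm (2 * s + e - 1)
      rw [Nat.sub_add_cancel hpos] at h2
      simp only [altDigit] at h1
      split_ifs at h1 <;> omega
  refine ⟨fun i hi => ?_, ?_⟩
  · rcases Nat.lt_or_eq_of_le hi with hi | rfl
    · exact hlt i hi
    · rw [ht, altDigit_self]
  · have := hadm (2 * s + e)
    omega

lemma zeck_tailLen_spec (N : ℕ) :
    (∀ i ≤ tailLen N, zeck N i = altDigit (tailLen N) i) ∧ zeck N (tailLen N + 1) = 0 := by
  unfold tailLen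
  split_ifs with h0
  · have hc : carryLen N = Nat.find (exists_break0 N) := by rw [carryLen, if_pos h0]
    simpa using zeck_eq_altDigit_of_pairs (e := 0) h0
      (fun j hj => by rw [hc] at hj; simpa using Nat.find_min (exists_break0 N) hj)
      (by simpa [hc] using Nat.find_spec (exists_break0 N))
  · have hc : carryLen N = Nat.find (exists_break1 N) := by rw [carryLen, if_neg h0]
    have he : zeck N 0 = 1 := by have := zeckAdmissible_zeck N 0; omega
    exact zeck_eq_altDigit_of_pairs he
      (fun j hj => by rw [hc] at hj; simpa using Nat.find_min (exists_break1 N) hj)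
      (by simpa [hc] using Nat.find_spec (exists_break1 N))

lemma sum_zeck_mul_fibF_of_eq_altDigit {N t a : ℕ} (hpat : ∀ i ≤ t, zeck N i = altDigit t i)
    (ha : a ≤ t) (hpar : a % 2 = t % 2) : ∑ i ∈ range a, zeck N i * fibF i + 1 = fibF a := by
  rw [← sum_altDigit_mul_fibF a]
  congr 1
  refine sum_congr rfl fun i hi => ?_
  rw [hpat i (by have := mem_range.1 hi; omega)]
  simp [altDigit, hpar]

/-! ### The eigenvector -/

lemma Pprod_succ (p : ℕ → ℝ) (t : ℕ) : Pprod p (t + 1) = Pprod p t * p (t + 1) :=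
  prod_Icc_succ_top (by omega) p

noncomputable def altProd (p : ℕ → ℝ) (z : ℂ) (a t : ℕ) : ℂ :=
  ∏ i ∈ Ico a t, qF p z i ^ altDigit t i

lemma altProd_add_two (p : ℕ → ℝ) (z : ℂ) {a t : ℕ} (h : a ≤ t) :
    altProd p z a (t + 2) = altProd p z a t * qF p z (t + 1) := by
  rw [altProd, show t + 2 = t + 1 + 1 from rfl, prod_Ico_succ_top (by omega),
    prod_Ico_succ_top h]
  simp [altProd, altDigit_add_two, altDigit_self, altDigit_succ]

section Recursion

variable {p : ℕ → ℝ} (z : ℂ)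

lemma eq_one_sub_add_mul_qF_zero (hp1 : p 1 ≠ 0) : z = 1 - p 1 + p 1 * qF p z 0 := by
  have : (p 1 : ℂ) ≠ 0 := by exact_mod_cast hp1
  rw [qF]; field_simp; ring

lemma mul_qF_one (hp2 : p 2 ≠ 0) : p 2 * qF p z 1 = qF p z 0 * qF p z 0 - (1 - p 2) := by
  have : (p 2 : ℂ) ≠ 0 := by exact_mod_cast hp2
  rw [qF.eq_2]; field_simp

lemma mul_qF_add_two (n : ℕ) (hr : rr p (n + 2) ≠ 0) :
    rr p (n + 2) * qF p z (n + 2) = qF p z (n + 1) * qF p z n - (1 - rr p (n + 2)) := by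
  have : (rr p (n + 2) : ℂ) ≠ 0 := by exact_mod_cast hr
  rw [qF.eq_3]; field_simp

/-- The row identity `S v = λ v` on the digits below an alternating tail of length `t`; its
induction step is the recursion defining `q_{F_{t+2}}`. -/
theorem p_one_mul_qF_zero_mul_altProd (hp : ∀ i, 2 ≤ i → p i ≠ 0) (t : ℕ) :
    p 1 * qF p z 0 * altProd p z 0 t =
      ∑ m ∈ Icc 1 ((t + 1) / 2),
          (Pprod p m : ℂ) * (1 - p (m + 1)) * altProd p z (2 * m - t % 2) t
        + Pprod p ((t + 1) / 2 + 1) * qF p z t := by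
  induction t using Nat.twoStepInduction with
  | zero => simp [altProd, Pprod]
  | one =>
    have h1 : Pprod p 1 = p 1 := by simp [Pprod]
    have h2 : Pprod p 2 = p 1 * p 2 := by rw [Pprod_succ, h1]
    have hA : altProd p z 0 1 = qF p z 0 := by simp [altProd, altDigit]
    rw [show (1 + 1) / 2 = 1 from rfl, Icc_self, sum_singleton, show 2 * 1 - 1 % 2 = 1 from rfl,
      hA, altProd, Ico_self, prod_empty, h1, h2]
    push_cast
    linear_combination -(p 1 : ℂ) * mul_qF_one z (hp 2 le_rfl)
  | more t ih _ =>
    set h := (t + 1) / 2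
    have hr : rr p (t + 2) = p (h + 2) := by rw [rr]; congr 1; omega
    have hsum : ∑ m ∈ Icc 1 (h + 1),
          (Pprod p m : ℂ) * (1 - p (m + 1)) * altProd p z (2 * m - t % 2) (t + 2)
        = (∑ m ∈ Icc 1 h, (Pprod p m : ℂ) * (1 - p (m + 1)) * altProd p z (2 * m - t % 2) t)
            * qF p z (t + 1) + Pprod p (h + 1) * (1 - p (h + 2)) := by
      rw [sum_Icc_succ_top (by omega), sum_mul, show 2 * (h + 1) - t % 2 = t + 2 by omega]
      congr 1
      · refine sum_congr rfl fun m hm => ?_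
        rw [altProd_add_two p z (by have := mem_Icc.1 hm; omega)]
        ring
      · simp [altProd]
    rw [show (t + 2 + 1) / 2 = h + 1 by omega, show (t + 2) % 2 = t % 2 by omega, hsum,
      altProd_add_two p z (Nat.zero_le t), Pprod_succ p (h + 1)]
    have hrec := mul_qF_add_two z t (hr ▸ hp (h + 2) (by omega))
    rw [hr] at hrec
    push_cast
    linear_combination qF p z (t + 1) * ih - (Pprod p (h + 1) : ℂ) * hrec

end Recursion

/-- Row `N` of `S u`, the two cases in the definition of `Smat` merged through `t = tailLen N`. -/
noncomputable def machineStep (p : ℕ → ℝ) (u : ℕ → ℂ) (N : ℕ) : ℂ :=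
  (1 - p 1) * u N + Pprod p ((tailLen N + 1) / 2 + 1) * u (N + 1)
    + ∑ m ∈ Icc 1 ((tailLen N + 1) / 2),
        (Pprod p m : ℂ) * (1 - p (m + 1)) * u (N + 1 - fibF (2 * m - tailLen N % 2))

lemma hasSum_ite_mul (u : ℕ → ℂ) (c : ℕ) (a : ℂ) :
    HasSum (fun j => (if j = c then a else 0) * u j) (a * u c) := by
  convert hasSum_ite_eq c (a * u c) using 1
  funext j
  split_ifs with h <;> simp [h]

lemma hasSum_row_mul (u : ℕ → ℂ) (N : ℕ) (b : ℕ → ℕ) (s : Finset ℕ) (a₀ a₁ : ℂ) (a : ℕ → ℂ) :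
    HasSum (fun j => ((if j = N then a₀ else 0) + ((if j = N + 1 then a₁ else 0)
        + ∑ m ∈ s, if j = b m then a m else 0)) * u j)
      (a₀ * u N + a₁ * u (N + 1) + ∑ m ∈ s, a m * u (b m)) := by
  simp only [add_mul, sum_mul, add_assoc]
  exact (hasSum_ite_mul u N a₀).add ((hasSum_ite_mul u (N + 1) a₁).add
    (hasSum_sum fun m _ => hasSum_ite_mul u (b m) (a m)))

lemma hasSum_Smat_mul (p : ℕ → ℝ) (u : ℕ → ℂ) (N : ℕ) :
    HasSum (fun j => (Smat p N j : ℂ) * u j) (machineStep p u N) := by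
  simp only [Smat, machineStep, tailLen]
  split_ifs with h0
  · rw [show (2 * carryLen N + 1) / 2 = carryLen N by omega]
    convert hasSum_row_mul u N _ _ _ _ _ using 3
    push_cast [apply_ite (fun x : ℝ => (x : ℂ))]
    simp
  · rw [show (2 * carryLen N + 1 + 1) / 2 = carryLen N + 1 by omega,
      show (2 * carryLen N + 1) % 2 = 1 by omega]
    convert hasSum_row_mul u N _ _ _ _ _ using 3
    push_cast [apply_ite (fun x : ℝ => (x : ℂ))]
    rfl

section Eigenvector

variable (p : ℕ → ℝ) (z : ℂ)

noncomputable def eigvec (N : ℕ) : ℂ := ∏ i ∈ range (N + 1), qF p z i ^ zeck N i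

lemma eigvec_eq_prod_range {N L : ℕ} (h : N < L) :
    eigvec p z N = ∏ i ∈ range L, qF p z i ^ zeck N i :=
  prod_subset (range_subset_range.2 h) fun i _ hi => by
    have : N < i := by rw [mem_range, not_lt] at hi; omega
    rw [zeck_eq_zero_of_lt_fibF (this.trans (lt_fibF i)), pow_zero]

lemma eigvec_zero : eigvec p z 0 = 1 := by simp [eigvec, zeck_zero]

lemma eigvec_fibF (k : ℕ) : eigvec p z (fibF k) = qF p z k := by
  simp only [eigvec, zeck_fibF, pow_ite, pow_one, pow_zero]
  rw [prod_ite_eq', if_pos (mem_range.2 (by have := lt_fibF k; omega))]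

lemma eigvec_eq_mul_of_zeck_eq {N N' b L : ℕ} (hN' : N' < L) (hb : b ≤ L)
    (h : ∀ i, b ≤ i → zeck N' i = zeck N i) :
    eigvec p z N' = (∏ i ∈ range b, qF p z i ^ zeck N' i) * ∏ i ∈ Ico b L, qF p z i ^ zeck N i := by
  rw [eigvec_eq_prod_range p z hN', ← prod_range_mul_prod_Ico _ hb]
  exact congrArg _ (prod_congr rfl fun i hi => by rw [h i (mem_Ico.1 hi).1])

lemma eigvec_add_one_sub_fibF {N t a : ℕ} (hpat : ∀ i ≤ t, zeck N i = altDigit t i) (ha : a ≤ t)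
    (hlow : ∑ i ∈ range a, zeck N i * fibF i + 1 = fibF a) :
    eigvec p z (N + 1 - fibF a) =
      altProd p z a t * ∏ i ∈ Ico (t + 1) (N + t + 2), qF p z i ^ zeck N i := by
  have hz := zeck_add_one_sub_fibF hlow
  rw [eigvec_eq_mul_of_zeck_eq p z (N := N) (b := t + 1) (L := N + t + 2) (by omega) (by omega)
    (fun i hi => by simp only [hz]; rw [if_neg (by omega)])]
  simp only [hz, prod_range_succ, ← prod_range_mul_prod_Ico _ ha]
  have h1 : ∏ i ∈ range a, qF p z i ^ (if i < a then 0 else zeck N i) = 1 :=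
    prod_eq_one fun i hi => by simp [mem_range.1 hi]
  have h2 : ∏ i ∈ Ico a t, qF p z i ^ (if i < a then 0 else zeck N i) = altProd p z a t :=
    prod_congr rfl fun i hi => by
      rw [mem_Ico] at hi
      rw [if_neg (by omega), hpat i (by omega)]
  rw [h1, h2, if_neg (by omega), hpat t le_rfl, altDigit_self, pow_zero, one_mul, mul_one]

lemma eigvec_add_one {N t : ℕ} (hpat : ∀ i ≤ t, zeck N i = altDigit t i)
    (hnext : zeck N (t + 1) = 0) :
    eigvec p z (N + 1) = qF p z t * ∏ i ∈ Ico (t + 1) (N + t + 2), qF p z i ^ zeck N i := by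
  have hz := zeck_add_one (sum_zeck_mul_fibF_of_eq_altDigit hpat le_rfl rfl)
    (by rw [hpat t le_rfl, altDigit_self]) hnext
  rw [eigvec_eq_mul_of_zeck_eq p z (N := N) (b := t + 1) (L := N + t + 2) (by omega) (by omega)
    (fun i hi => by simp only [hz]; rw [if_neg (by omega), if_neg (by omega)])]
  simp only [hz, prod_range_succ]
  rw [prod_eq_one fun i hi => by simp [mem_range.1 hi]]
  simp

lemma eigvec_row (hp : ∀ i, 1 ≤ i → p i ≠ 0) {N t : ℕ}
    (hpat : ∀ i ≤ t, zeck N i = altDigit t i) (hnext : zeck N (t + 1) = 0) :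
    (1 - p 1) * eigvec p z N + Pprod p ((t + 1) / 2 + 1) * eigvec p z (N + 1)
      + ∑ m ∈ Icc 1 ((t + 1) / 2),
          (Pprod p m : ℂ) * (1 - p (m + 1)) * eigvec p z (N + 1 - fibF (2 * m - t % 2))
      = z * eigvec p z N := by
  have hN := eigvec_add_one_sub_fibF p z hpat (Nat.zero_le t) (by simp [fibF])
  rw [show N + 1 - fibF 0 = N from Nat.add_sub_cancel _ _] at hN
  have hN1 := eigvec_add_one p z hpat hnext
  have hback := fun m (hm : m ∈ Icc 1 ((t + 1) / 2)) => eigvec_add_one_sub_fibF p z hpat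
    (a := 2 * m - t % 2) (by have := mem_Icc.1 hm; omega)
    (sum_zeck_mul_fibF_of_eq_altDigit hpat (by have := mem_Icc.1 hm; omega)
      (by have := mem_Icc.1 hm; omega))
  set W := ∏ i ∈ Ico (t + 1) (N + t + 2), qF p z i ^ zeck N i
  rw [sum_congr rfl fun m hm => by rw [hback m hm], hN, hN1]
  simp only [← mul_assoc, ← sum_mul]
  linear_combination (-W) * p_one_mul_qF_zero_mul_altProd z (fun i hi => hp i (by omega)) t
    - altProd p z 0 t * W * eq_one_sub_add_mul_qF_zero z (hp 1 le_rfl)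

theorem machineStep_eigvec (hp : ∀ i, 1 ≤ i → p i ≠ 0) (N : ℕ) :
    machineStep p (eigvec p z) N = z * eigvec p z N :=
  eigvec_row p z hp (zeck_tailLen_spec N).1 (zeck_tailLen_spec N).2

end Eigenvector

/-! ### Truncated eigenvectors -/

/-- A backward jump from a state `N ≥ F_k` either stays `≥ F_k` or is the longest one and lands
at `0`. -/
lemma fibF_le_add_one_sub_fibF_or {N a t k : ℕ}
    (hlow : ∑ i ∈ range a, zeck N i * fibF i + 1 = fibF a)
    (hlow' : ∑ i ∈ range t, zeck N i * fibF i + 1 = fibF t) (hat : a ≤ t) (hk : fibF k ≤ N) :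
    fibF k ≤ N + 1 - fibF a ∨ (a = t ∧ N + 1 - fibF a = 0) := by
  by_cases hM : fibF k ≤ N + 1 - fibF a
  · exact Or.inl hM
  right
  have hz := zeck_add_one_sub_fibF hlow
  have hvan : ∀ i, max a k ≤ i → zeck N i = 0 := fun i hi => by
    have := zeck_eq_zero_of_lt_fibF
      ((not_le.1 hM).trans_le (fibF_strictMono.monotone (le_of_max_le_right hi)))
    rw [hz] at this
    simpa [show ¬i < a by omega] using this
  have hN := lt_fibF_of_zeck_eq_zero hvan
  rcases max_choice a k with hmax | hmax <;> rw [hmax] at hN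
  · have := sum_range_zeck_mul_fibF_le N t
    have := fibF_strictMono.monotone hat
    exact ⟨fibF_strictMono.injective (by omega), by omega⟩
  · omega

noncomputable def truncEigvec (p : ℕ → ℝ) (z : ℂ) (k N : ℕ) : ℂ :=
  if N < fibF k then eigvec p z N else 0

lemma machineStep_sub_machineStep (p : ℕ → ℝ) {u u' : ℕ → ℂ} {N : ℕ}
    (h : ∀ j ≤ N, u j = u' j) :
    machineStep p u N - machineStep p u' N =
      Pprod p ((tailLen N + 1) / 2 + 1) * (u (N + 1) - u' (N + 1)) := by
  unfold machineStep
  rw [h N le_rfl, sum_congr rfl fun m _ => by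
    rw [h _ (by have := fibF_pos (2 * m - tailLen N % 2); omega)]]
  ring

section Bounds

variable {p : ℕ → ℝ} (hp : ∀ i, 1 ≤ i → 0 < p i ∧ p i ≤ 1)
include hp

lemma Pprod_mem_Icc (t : ℕ) : Pprod p t ∈ Set.Icc 0 1 :=
  ⟨prod_nonneg fun i hi => (hp i (mem_Icc.1 hi).1).1.le,
    prod_le_one (fun i hi => (hp i (mem_Icc.1 hi).1).1.le) fun i hi => (hp i (mem_Icc.1 hi).1).2⟩

lemma norm_Pprod_le_one (t : ℕ) : ‖(Pprod p t : ℂ)‖ ≤ 1 := by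
  rw [Complex.norm_real, Real.norm_of_nonneg (Pprod_mem_Icc hp t).1]
  exact (Pprod_mem_Icc hp t).2

lemma norm_Pprod_mul_one_sub_le_one (m : ℕ) : ‖(Pprod p m : ℂ) * (1 - p (m + 1))‖ ≤ 1 := by
  have h := hp (m + 1) (by omega)
  obtain ⟨h0, h1⟩ := Pprod_mem_Icc hp m
  rw [show (Pprod p m : ℂ) * (1 - p (m + 1)) = ((Pprod p m * (1 - p (m + 1)) : ℝ) : ℂ) by
    push_cast; rfl, Complex.norm_real, Real.norm_of_nonneg (by nlinarith)]
  nlinarith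

variable (z : ℂ)

lemma norm_machineStep_truncEigvec_le {k i : ℕ} (hi : fibF k ≤ i) :
    ‖machineStep p (truncEigvec p z k) i‖ ≤ 1 := by
  obtain ⟨hpat, -⟩ := zeck_tailLen_spec i
  unfold machineStep
  rw [truncEigvec, if_neg (by omega), truncEigvec, if_neg (by omega)]
  set t := tailLen i
  simp only [mul_zero, zero_add]
  calc _ ≤ ∑ m ∈ Icc 1 ((t + 1) / 2), ‖(Pprod p m : ℂ) * (1 - p (m + 1)) *
          truncEigvec p z k (i + 1 - fibF (2 * m - t % 2))‖ := norm_sum_le _ _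
    _ ≤ ∑ m ∈ Icc 1 ((t + 1) / 2), if m = (t + 1) / 2 then 1 else 0 := sum_le_sum fun m hm => by
        rw [mem_Icc] at hm
        rcases fibF_le_add_one_sub_fibF_or
          (sum_zeck_mul_fibF_of_eq_altDigit hpat (a := 2 * m - t % 2) (by omega) (by omega))
          (sum_zeck_mul_fibF_of_eq_altDigit hpat le_rfl rfl) (by omega) hi with hge | ⟨hat, h0⟩
        · rw [truncEigvec, if_neg (not_lt.2 hge), mul_zero, norm_zero]
          split_ifs <;> norm_num
        · rw [if_pos (by omega), h0, truncEigvec, if_pos (fibF_pos k), eigvec_zero, mul_one]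
          exact norm_Pprod_mul_one_sub_le_one hp m
    _ ≤ 1 := by
        rw [sum_ite_eq']
        split_ifs <;> norm_num

theorem norm_machineStep_truncEigvec_sub_le (k i : ℕ) :
    ‖machineStep p (truncEigvec p z k) i - z * truncEigvec p z k i‖ ≤ max ‖qF p z k‖ 1 := by
  have hv := machineStep_eigvec p z (fun i hi => (hp i hi).1.ne') i
  have hdiff := machineStep_sub_machineStep p (u := truncEigvec p z k) (u' := eigvec p z) (N := i)
  rcases lt_trichotomy (i + 1) (fibF k) with hik | hik | hik
  · have heq : machineStep p (truncEigvec p z k) i = machineStep p (eigvec p z) i :=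
      sub_eq_zero.1 (by
        rw [hdiff fun j hj => if_pos (by omega), truncEigvec, if_pos hik, sub_self, mul_zero])
    rw [heq, hv, truncEigvec, if_pos (by omega), sub_self, norm_zero]
    exact le_max_of_le_right zero_le_one
  · rw [truncEigvec, if_pos (by omega), ← hv, hdiff fun j hj => if_pos (by omega), truncEigvec,
      if_neg (by omega), hik, eigvec_fibF, zero_sub, mul_neg, norm_neg, norm_mul]
    exact le_max_of_le_left (mul_le_of_le_one_left (norm_nonneg _) (norm_Pprod_le_one hp _))
  · rw [truncEigvec, if_neg (by omega), mul_zero, sub_zero]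
    exact le_max_of_le_right (norm_machineStep_truncEigvec_le hp z (by omega))

end Bounds

lemma bddAbove_truncEigvec (p : ℕ → ℝ) (z : ℂ) (k : ℕ) :
    BddAbove (Set.range fun i => ‖truncEigvec p z k i‖) := by
  refine ⟨∑ j ∈ range (fibF k), ‖eigvec p z j‖, ?_⟩
  rintro _ ⟨i, rfl⟩
  dsimp only [truncEigvec]
  split_ifs with h
  · exact single_le_sum (fun j _ => norm_nonneg (eigvec p z j)) (mem_range.2 h)
  · simpa using sum_nonneg fun j _ => norm_nonneg (eigvec p z j)

theorem exists_truncEigvec_defect_le {p : ℕ → ℝ} (hp : ∀ i, 1 ≤ i → 0 < p i ∧ p i ≤ 1)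
    {z : ℂ} {C : ℝ} (hC : ∀ n, ‖qF p z n‖ ≤ C)
    (hunb : ¬BddAbove (Set.range fun N => ‖eigvec p z N‖)) {ε : ℝ} (hε : 0 < ε) :
    ∃ K : ℕ, ∀ k, K ≤ k → ∀ i, ‖machineStep p (truncEigvec p z k) i - z * truncEigvec p z k i‖
      ≤ ε * ⨆ j, ‖truncEigvec p z k j‖ := by
  obtain ⟨_, ⟨N, rfl⟩, hN⟩ := not_bddAbove_iff.1 hunb (max C 1 / ε)
  rw [div_lt_iff₀ hε] at hN
  refine ⟨N, fun k hk i => ?_⟩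
  have hNk : truncEigvec p z k N = eigvec p z N := if_pos (lt_fibF_of_le hk)
  calc _ ≤ max ‖qF p z k‖ 1 := norm_machineStep_truncEigvec_sub_le hp z k i
    _ ≤ max C 1 := max_le_max_right 1 (hC k)
    _ ≤ ε * ‖truncEigvec p z k N‖ := by rw [hNk]; linarith
    _ ≤ ε * ⨆ j, ‖truncEigvec p z k j‖ :=
      mul_le_mul_of_nonneg_left (le_ciSup (bddAbove_truncEigvec p z k) N) hε.le

lemma machineStep_const_mul (p : ℕ → ℝ) (c : ℂ) (u : ℕ → ℂ) (N : ℕ) :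
    machineStep p (fun j => c * u j) N = c * machineStep p u N := by
  simp only [machineStep, mul_add, mul_sum]
  congr 1
  · ring
  · exact sum_congr rfl fun m _ => by ring

theorem exists_approx_eigenvector (p : ℕ → ℝ) (z : ℂ) (f : ℕ → ℕ → ℂ)
    (hbdd : ∀ k, BddAbove (Set.range fun i => ‖f k i‖)) (hne : ∀ k, ∃ i, f k i ≠ 0)
    (herr : ∀ ε : ℝ, 0 < ε → ∃ K : ℕ, ∀ k, K ≤ k → ∀ i,
      ‖machineStep p (f k) i - z * f k i‖ ≤ ε * ⨆ j, ‖f k j‖) :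
    ∃ u : ℕ → ℕ → ℂ,
      (∀ k, (∀ i, ‖u k i‖ ≤ 1) ∧ (⨆ i : ℕ, ‖u k i‖) = 1) ∧
      ∀ ε : ℝ, 0 < ε → ∃ K : ℕ, ∀ k, K ≤ k → ∀ i : ℕ,
        ‖(∑' j : ℕ, (Smat p i j : ℂ) * u k j) - z * u k i‖ ≤ ε := by
  set M := fun k => ⨆ j, ‖f k j‖
  have hle : ∀ k i, ‖f k i‖ ≤ M k := fun k i => le_ciSup (hbdd k) i
  have hM : ∀ k, 0 < M k := fun k =>
    let ⟨i, hi⟩ := hne k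
    (norm_pos_iff.2 hi).trans_le (hle k i)
  have hnorm : ∀ k i, ‖(M k : ℂ)⁻¹ * f k i‖ = (M k)⁻¹ * ‖f k i‖ := fun k i => by
    rw [norm_mul, norm_inv, Complex.norm_real, Real.norm_of_nonneg (hM k).le]
  refine ⟨fun k i => (M k : ℂ)⁻¹ * f k i, fun k => ⟨fun i => ?_, ?_⟩, fun ε hε => ?_⟩
  · rw [hnorm, inv_mul_le_iff₀ (hM k), mul_one]
    exact hle k i
  · simp only [hnorm]
    rw [← Real.mul_iSup_of_nonneg (inv_nonneg.2 (hM k).le), inv_mul_cancel₀ (hM k).ne']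
  · obtain ⟨K, hK⟩ := herr ε hε
    refine ⟨K, fun k hk i => ?_⟩
    rw [(hasSum_Smat_mul p _ i).tsum_eq, machineStep_const_mul, mul_left_comm, ← mul_sub,
      norm_mul, norm_inv, Complex.norm_real, Real.norm_of_nonneg (hM k).le,
      inv_mul_le_iff₀ (hM k)]
    exact (hK k hk i).trans_eq (mul_comm _ _)

/-- Every `λ ∈ E` is an approximate eigenvalue of `S` acting on
`ℓ∞(ℕ)`: there is a sequence `(u k)` of bounded sequences of sup-norm `1` with
`‖S (u k) - λ (u k)‖_∞ → 0` (i.e. for every `ε > 0`, eventually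
`‖(S (u k)) i - λ * u k i‖ ≤ ε` for all `i`). -/
theorem stmt10 (p : ℕ → ℝ) (hp : ∀ i, 1 ≤ i → 0 < p i ∧ p i ≤ 1)
    (lam : ℂ) (hlam : lam ∈ Eset p) :
    ∃ u : ℕ → ℕ → ℂ,
      (∀ k, (∀ i, ‖u k i‖ ≤ 1) ∧ (⨆ i : ℕ, ‖u k i‖) = 1) ∧
      ∀ ε : ℝ, 0 < ε → ∃ K : ℕ, ∀ k, K ≤ k → ∀ i : ℕ,
        ‖(∑' j : ℕ, (Smat p i j : ℂ) * u k j) - lam * u k i‖ ≤ ε := by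
  obtain ⟨C, hC⟩ := hlam
  by_cases hbdd : BddAbove (Set.range fun N => ‖eigvec p lam N‖)
  · refine exists_approx_eigenvector p lam (fun _ => eigvec p lam) (fun _ => hbdd)
      (fun _ => ⟨0, by simp [eigvec_zero]⟩) fun ε hε => ⟨0, fun k _ i => ?_⟩
    rw [machineStep_eigvec p lam (fun i hi => (hp i hi).1.ne') i, sub_self, norm_zero]
    exact mul_nonneg hε.le (le_ciSup_of_le hbdd 0 (norm_nonneg _))
  · exact exists_approx_eigenvector p lam (truncEigvec p lam) (bddAbove_truncEigvec p lam)
      (fun k => ⟨0, by simp [truncEigvec, fibF_pos, eigvec_zero]⟩)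
      fun ε hε => exists_truncEigvec_defect_le hp hC hbdd hε
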